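/- arXiv:2109.14108 — 2 statements merged into one kernel-verified Lean document; each statement's English description precedes it below -/
import Mathlib

section
/- For m ≥ 4, n ≥ 4, the set S = A ∪ B ∪ C, where A = {(x,2) : 1 ≤ x ≤ m}, B = {(2,y) : 3 ≤ y ≤ n}, and C = {(x,y) : x ∈ {5, 8, 11, …} with 5 ≤ x ≤ m−1 and x ≡ 2 (mod 3), 3 ≤ y ≤ n}, assuming m ≡ 0 (mod 3), is a dominating set of the m × n grid graph: every vertex (x,y) with 1 ≤ x ≤ m and 1 ≤ y ≤ n either lies in S or is adjacent (differing by 1 in exactly one coordinate) to a vertex in S. -/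
def gridAdj (p q : ℕ × ℕ) : Prop :=
  (p.1 = q.1 ∧ (p.2 = q.2 + 1 ∨ q.2 = p.2 + 1)) ∨
  (p.2 = q.2 ∧ (p.1 = q.1 + 1 ∨ q.1 = p.1 + 1))

def inGrid (m n : ℕ) (p : ℕ × ℕ) : Prop :=
  1 ≤ p.1 ∧ p.1 ≤ m ∧ 1 ≤ p.2 ∧ p.2 ≤ n

def dominatesGrid (m n : ℕ) (S : Set (ℕ × ℕ)) : Prop :=
  ∀ p, inGrid m n p → p ∈ S ∨ ∃ q ∈ S, gridAdj p q

def connectedIn (S : Set (ℕ × ℕ)) : Prop :=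
  ∀ a ∈ S, ∀ b ∈ S,
    Relation.ReflTransGen (fun u v => u ∈ S ∧ v ∈ S ∧ gridAdj u v) a b

def isCDS (m n : ℕ) (S : Set (ℕ × ℕ)) : Prop :=
  (∀ p ∈ S, inGrid m n p) ∧ dominatesGrid m n S ∧ connectedIn S

theorem stmt4 (m n : ℕ) (hm : 4 ≤ m) (hn : 4 ≤ n) (hm3 : m % 3 = 0) :
    dominatesGrid m n {p : ℕ × ℕ |
      (p.2 = 2 ∧ 1 ≤ p.1 ∧ p.1 ≤ m) ∨
      (p.1 = 2 ∧ 3 ≤ p.2 ∧ p.2 ≤ n) ∨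
      (5 ≤ p.1 ∧ p.1 ≤ m - 1 ∧ p.1 % 3 = 2 ∧ 3 ≤ p.2 ∧ p.2 ≤ n)} := by
  intro p hp
  obtain ⟨x, y⟩ := p
  obtain ⟨hx1, hxm, hy1, hyn⟩ := hp
  simp only [Set.mem_setOf_eq]
  by_cases hy2 : y = 2
  · left; left; exact ⟨hy2, hx1, hxm⟩
  by_cases hy13 : y = 1 ∨ y = 3
  · right
    exact ⟨(x, 2), Or.inl ⟨rfl, hx1, hxm⟩, Or.inl ⟨rfl, by omega⟩⟩
  have hy : 4 ≤ y := by omega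
  by_cases hx2 : x = 2
  · left; right; left; exact ⟨hx2, by omega, hyn⟩
  by_cases hx13 : x = 1 ∨ x = 3
  · right
    exact ⟨(2, y), Or.inr (Or.inl ⟨rfl, by omega, hyn⟩), Or.inr ⟨rfl, by omega⟩⟩
  have hx4 : 4 ≤ x := by omega
  have hr : x % 3 = 0 ∨ x % 3 = 1 ∨ x % 3 = 2 := by omega
  rcases hr with h | h | h
  · right
    refine ⟨(x - 1, y), Or.inr (Or.inr ⟨by omega, by omega, by omega, by omega, hyn⟩),
      Or.inr ⟨rfl, Or.inl (by omega)⟩⟩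
  · right
    refine ⟨(x + 1, y), Or.inr (Or.inr ⟨by omega, by omega, by omega, by omega, hyn⟩),
      Or.inr ⟨rfl, Or.inr rfl⟩⟩
  · left; right; right
    exact ⟨by omega, by omega, h, by omega, hyn⟩
end

section
/- For m ≥ 4, n ≥ 4 with m ≡ 0 (mod 3), the set S = A ∪ B ∪ C with A = {(x,2) : 1 ≤ x ≤ m}, B = {(2,y) : 3 ≤ y ≤ n}, and C = {(x,y) : 5 ≤ x ≤ m−1, x ≡ 2 (mod 3), 3 ≤ y ≤ n}, induces a connected subgraph of the m × n grid graph: any two vertices of S are joined by a path all of whose vertices lie in S. -/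
abbrev S5 (m n : ℕ) : Set (ℕ × ℕ) := {p : ℕ × ℕ |
      (p.2 = 2 ∧ 1 ≤ p.1 ∧ p.1 ≤ m) ∨
      (p.1 = 2 ∧ 3 ≤ p.2 ∧ p.2 ≤ n) ∨
      (5 ≤ p.1 ∧ p.1 ≤ m - 1 ∧ p.1 % 3 = 2 ∧ 3 ≤ p.2 ∧ p.2 ≤ n)}

abbrev R5 (m n : ℕ) (u v : ℕ × ℕ) : Prop := u ∈ S5 m n ∧ v ∈ S5 m n ∧ gridAdj u v

lemma gridAdj_symm {p q : ℕ × ℕ} (h : gridAdj p q) : gridAdj q p := by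
  unfold gridAdj at *; tauto

lemma memA {m n x : ℕ} (h1 : 1 ≤ x) (h2 : x ≤ m) : ((x, 2) : ℕ × ℕ) ∈ S5 m n :=
  Or.inl ⟨rfl, h1, h2⟩

lemma row_conn (m n : ℕ) (hm : 4 ≤ m) (x : ℕ) (h1 : 1 ≤ x) (h2 : x ≤ m) :
    Relation.ReflTransGen (R5 m n) (x, 2) (2, 2) := by
  induction x with
  | zero => omega
  | succ k ih =>
    rcases Nat.lt_or_ge k 2 with hk | hk
    · interval_cases k
      · have step : R5 m n (1, 2) (2, 2) :=
          ⟨memA (by omega) (by omega), memA (by omega) (by omega),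
           Or.inr ⟨rfl, Or.inr rfl⟩⟩
        exact Relation.ReflTransGen.single step
      · exact Relation.ReflTransGen.refl
    · have step : R5 m n (k + 1, 2) (k, 2) :=
        ⟨memA (by omega) h2, memA (by omega) (by omega),
         Or.inr ⟨rfl, Or.inl rfl⟩⟩
      exact Relation.ReflTransGen.head step (ih (by omega) (by omega))

lemma col_conn (m n x : ℕ) (hx : ∀ y, 2 ≤ y → y ≤ n → ((x, y) : ℕ × ℕ) ∈ S5 m n)
    (y : ℕ) (h1 : 2 ≤ y) (h2 : y ≤ n) :
    Relation.ReflTransGen (R5 m n) (x, y) (x, 2) := by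
  induction y with
  | zero => omega
  | succ k ih =>
    rcases Nat.lt_or_ge k 2 with hk | hk
    · interval_cases k
      · omega
      · exact Relation.ReflTransGen.refl
    · have step : R5 m n (x, k + 1) (x, k) :=
        ⟨hx _ (by omega) h2, hx _ hk (by omega),
         Or.inl ⟨rfl, Or.inl rfl⟩⟩
      exact Relation.ReflTransGen.head step (ih (by omega) (by omega))

lemma to_center (m n : ℕ) (hm : 4 ≤ m) (hn : 4 ≤ n) (p : ℕ × ℕ) (hp : p ∈ S5 m n) :
    Relation.ReflTransGen (R5 m n) p (2, 2) := by
  obtain ⟨x, y⟩ := p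
  rcases hp with ⟨hy, h1, h2⟩ | ⟨hx, h1, h2⟩ | ⟨h1, h2, h3, h4, h5⟩
  · simp only at hy h1 h2; subst hy; exact row_conn m n hm x h1 h2
  · simp only at hx h1 h2; subst hx
    have hmem : ∀ z, 2 ≤ z → z ≤ n → ((2, z) : ℕ × ℕ) ∈ S5 m n := by
      intro z hz1 hz2
      rcases Nat.lt_or_ge z 3 with h | h
      · have hz : z = 2 := by omega
        subst hz; exact memA (by omega) (by omega)
      · exact Or.inr (Or.inl ⟨rfl, h, hz2⟩)
    exact (col_conn m n 2 hmem y (by omega) h2).trans (row_conn m n hm 2 (by omega) (by omega))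
  · simp only at h1 h2 h3 h4 h5
    have hmem : ∀ z, 2 ≤ z → z ≤ n → ((x, z) : ℕ × ℕ) ∈ S5 m n := by
      intro z hz1 hz2
      rcases Nat.lt_or_ge z 3 with h | h
      · have hz : z = 2 := by omega
        subst hz; exact memA (by omega) (by omega)
      · exact Or.inr (Or.inr ⟨h1, h2, h3, h, hz2⟩)
    exact (col_conn m n x hmem y (by omega) h5).trans (row_conn m n hm x (by omega) (by omega))

theorem stmt5 (m n : ℕ) (hm : 4 ≤ m) (hn : 4 ≤ n) (hm3 : m % 3 = 0) :
    connectedIn {p : ℕ × ℕ |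
      (p.2 = 2 ∧ 1 ≤ p.1 ∧ p.1 ≤ m) ∨
      (p.1 = 2 ∧ 3 ≤ p.2 ∧ p.2 ≤ n) ∨
      (5 ≤ p.1 ∧ p.1 ≤ m - 1 ∧ p.1 % 3 = 2 ∧ 3 ≤ p.2 ∧ p.2 ≤ n)} := by
  intro a ha b hb
  have hsymm : Symmetric (R5 m n) := fun u v ⟨h1, h2, h3⟩ => ⟨h2, h1, gridAdj_symm h3⟩
  have h1 := to_center m n hm hn a ha
  have h2 := to_center m n hm hn b hb
  exact h1.trans ((@Relation.ReflTransGen.stdSymm _ _ ⟨fun _ _ h => hsymm h⟩).symm _ _ h2)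
end
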